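/- The number of permutations of length n avoiding 231 and the mesh pattern (21, {⟨0,1⟩,⟨1,0⟩,⟨1,1⟩,⟨1,2⟩,⟨2,1⟩}) equals the (n−1)-st Motzkin number for n ≥ 1 (and equals 1 for n = 0); the generating function P(x) satisfies P(x) = x·P(x)² − x·(P(x) − 1) + 1. -/

import Mathlib

def extFun {k n : ℕ} (α : Fin k → Fin n) : ℕ → ℕ := fun i =>
  if h0 : i = 0 then 0
  else if h1 : i ≤ k then ((α ⟨i - 1, by omega⟩ : Fin n) : ℕ) + 1
  else n + 1

/-- An occurrence of the mesh pattern `(τ, R)` in `π` given by index/value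
injections `α`, `β` (using 1-indexed coordinates for the regions). -/
def MeshOcc {k n : ℕ} (τ : Equiv.Perm (Fin k)) (R : Finset (ℕ × ℕ))
    (π : Equiv.Perm (Fin n)) (α β : Fin k → Fin n) : Prop :=
  StrictMono α ∧ StrictMono β ∧ (∀ i, π (α i) = β (τ i)) ∧
    ∀ p ∈ R, ∀ x : Fin n,
      ¬(extFun α p.1 < (x : ℕ) + 1 ∧ (x : ℕ) + 1 < extFun α (p.1 + 1) ∧
        extFun β p.2 < (π x : ℕ) + 1 ∧ (π x : ℕ) + 1 < extFun β (p.2 + 1))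

def ContainsMesh {k n : ℕ} (τ : Equiv.Perm (Fin k)) (R : Finset (ℕ × ℕ))
    (π : Equiv.Perm (Fin n)) : Prop :=
  ∃ α β : Fin k → Fin n, MeshOcc τ R π α β

def AvoidsMesh {k n : ℕ} (τ : Equiv.Perm (Fin k)) (R : Finset (ℕ × ℕ))
    (π : Equiv.Perm (Fin n)) : Prop :=
  ¬ ContainsMesh τ R π

/-- `π` avoids the classical pattern 231. -/
def Avoids231 {n : ℕ} (π : Equiv.Perm (Fin n)) : Prop :=
  ¬ ∃ i j k : Fin n, i < j ∧ j < k ∧ π k < π i ∧ π i < π j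

/-- The Motzkin numbers: `M 0 = 1`,
`M (n+1) = M n + ∑_{i=0}^{n-1} M i * M (n-1-i)`. -/
noncomputable def motzkin : ℕ → ℕ := fun n =>
  Nat.strongRecOn n fun n ih =>
    if h : n = 0 then 1
    else
      ih (n - 1) (by omega) +
        ∑ i : Fin (n - 1),
          ih i (i.isLt.trans_le (by omega)) * ih (n - 2 - i) (by omega)

/-- The number of permutations of length `n` avoiding 231 and the mesh pattern
`(21, {⟨0,1⟩,⟨1,0⟩,⟨1,1⟩,⟨1,2⟩,⟨2,1⟩})`. -/
noncomputable def motzkinCount (n : ℕ) : ℕ :=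
  Nat.card {π : Equiv.Perm (Fin n) // Avoids231 π ∧
    AvoidsMesh (Equiv.swap 0 1 : Equiv.Perm (Fin 2))
      ({(0,1),(1,0),(1,1),(1,2),(2,1)} : Finset (ℕ × ℕ)) π}

/-!
An occurrence of the mesh pattern is exactly a pair of adjacent positions carrying adjacent values
in decreasing order, `π (i + 1) + 1 = π i`; call permutations avoiding 231 and such unit descents
admissible. A 231-avoider splits at its maximum as a direct sum `A ⊕ C`, where `C` starts with its
maximum and every entry of `A` lies below every entry of `C`; both parts are again admissible, and
`C = 1 ⊖ B` with `B` admissible and not starting with its own maximum. Writing `F` for the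
generating function of admissible permutations and `H` for that of admissible permutations starting
with their maximum, this gives `F = 1 + x F H` and `F = (1 + x) H`; eliminating `H` yields
`F = x F² - x (F - 1) + 1`, whose coefficients satisfy the Motzkin recurrence.
-/

open Equiv Equiv.Perm Fin

section Mesh

variable {k n : ℕ}

@[simp] lemma extFun_zero (α : Fin k → Fin n) : extFun α 0 = 0 := rfl

lemma extFun_succ (α : Fin k → Fin n) (i : Fin k) : extFun α (i + 1) = α i + 1 := by
  simp [extFun, Nat.succ_le_of_lt i.isLt]

lemma extFun_of_lt (α : Fin k → Fin n) {i : ℕ} (h : k < i) : extFun α i = n + 1 := by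
  simp [extFun, show i ≠ 0 by omega, show ¬i ≤ k by omega]

@[simp] lemma extFun_one (α : Fin 2 → Fin n) : extFun α 1 = α 0 + 1 := extFun_succ α 0

@[simp] lemma extFun_two (α : Fin 2 → Fin n) : extFun α 2 = α 1 + 1 := extFun_succ α 1

@[simp] lemma extFun_three (α : Fin 2 → Fin n) : extFun α 3 = n + 1 :=
  extFun_of_lt α (by norm_num)

lemma MeshOcc.adjacent {π : Perm (Fin n)} {α β : Fin 2 → Fin n}
    (h : MeshOcc (swap 0 1) {(0,1),(1,0),(1,1),(1,2),(2,1)} π α β) :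
    (α 1 : ℕ) = α 0 + 1 ∧ (π (α 1) : ℕ) + 1 = π (α 0) := by
  obtain ⟨hα, hβ, hval, hbox⟩ := h
  have hpq : (α 0 : ℕ) < α 1 := hα (by decide)
  have hab : (β 0 : ℕ) < β 1 := hβ (by decide)
  have hp : π (α 0) = β 1 := hval 0
  have hq : π (α 1) = β 0 := hval 1
  simp only [Finset.mem_insert, Finset.mem_singleton, forall_eq_or_imp, forall_eq,
    Nat.reduceAdd, extFun_zero, extFun_one, extFun_two, extFun_three] at hbox
  -- a point strictly between the two columns, or strictly between the two rows,
  -- would lie in one of the three boxes of that column or row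
  have hcol (x : Fin n) (h0 : α 0 < x) (h1 : x < α 1) : False := by
    have hxb : π x ≠ β 1 := fun h => h0.ne' (π.injective (h.trans hp.symm))
    have hxa : π x ≠ β 0 := fun h => h1.ne (π.injective (h.trans hq.symm))
    simp only [Fin.lt_def, ne_eq, Fin.ext_iff] at h0 h1 hxa hxb
    have := hbox.2.1 x; have := hbox.2.2.1 x; have := hbox.2.2.2.1 x
    omega
  have hrow (x : Fin n) (h0 : β 0 < π x) (h1 : π x < β 1) : False := by
    have hxp : x ≠ α 0 := by rintro rfl; exact h1.ne hp
    have hxq : x ≠ α 1 := by rintro rfl; exact h0.ne' hq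
    simp only [Fin.lt_def, ne_eq, Fin.ext_iff] at h0 h1 hxp hxq
    have := hbox.1 x; have := hbox.2.2.1 x; have := hbox.2.2.2.2 x
    omega
  rw [hp, hq]
  constructor
  · by_contra h
    exact hcol ⟨α 0 + 1, by omega⟩ (Fin.lt_def.2 (by simp)) (Fin.lt_def.2 (by simp; omega))
  · by_contra h
    exact hrow (π.symm ⟨β 0 + 1, by omega⟩) (by simp [Fin.lt_def]) (by simp [Fin.lt_def]; omega)

lemma meshOcc_of_adjacent {π : Perm (Fin n)} {i j : Fin n} (hij : (j : ℕ) = i + 1)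
    (hπ : (π j : ℕ) + 1 = π i) :
    MeshOcc (swap 0 1) {(0,1),(1,0),(1,1),(1,2),(2,1)} π ![i, j] ![π j, π i] := by
  refine ⟨?_, ?_, fun t => by fin_cases t <;> rfl, ?_⟩
  · simpa [Fin.strictMono_iff_lt_succ] using Fin.lt_def.2 (by omega)
  · simpa [Fin.strictMono_iff_lt_succ] using Fin.lt_def.2 (by omega)
  · simp only [Finset.mem_insert, Finset.mem_singleton, forall_eq_or_imp, forall_eq,
      Nat.reduceAdd, extFun_zero, extFun_one, extFun_two, extFun_three, Matrix.cons_val_zero,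
      Matrix.cons_val_one, not_and, not_lt]
    refine ⟨?_, ?_, ?_, ?_, ?_⟩ <;> intro x <;> omega

end Mesh

def NoUnitDescent {n : ℕ} (π : Perm (Fin n)) : Prop :=
  ∀ i j : Fin n, (j : ℕ) = i + 1 → (π j : ℕ) + 1 ≠ π i

theorem avoidsMesh_iff_noUnitDescent {n : ℕ} (π : Perm (Fin n)) :
    AvoidsMesh (swap 0 1 : Perm (Fin 2)) {(0,1),(1,0),(1,1),(1,2),(2,1)} π ↔
      NoUnitDescent π := by
  refine not_iff_comm.1 ⟨fun h => ?_, fun ⟨α, β, hocc⟩ h => ?_⟩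
  · simp only [NoUnitDescent, not_forall, not_not] at h
    obtain ⟨i, j, hij, hπ⟩ := h
    exact ⟨_, _, meshOcc_of_adjacent hij hπ⟩
  · obtain ⟨hα, hπ⟩ := hocc.adjacent
    exact h _ _ hα hπ

def Admissible {n : ℕ} (π : Perm (Fin n)) : Prop := Avoids231 π ∧ NoUnitDescent π

lemma admissible_of_le_one {n : ℕ} (hn : n ≤ 1) (π : Perm (Fin n)) : Admissible π :=
  ⟨fun ⟨i, j, l, hij, hjl, _⟩ => by rw [Fin.lt_def] at hij hjl; omega, fun i j hij _ => by omega⟩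

section Restriction

variable {k n : ℕ} {π : Perm (Fin n)} {σ : Perm (Fin k)} {f g : Fin k → Fin n}

lemma Avoids231.of_apply_eq (hπ : Avoids231 π) (hf : StrictMono f) (hg : StrictMono g)
    (h : ∀ i, π (f i) = g (σ i)) : Avoids231 σ := by
  rintro ⟨i, j, l, hij, hjl, hli, hij'⟩
  exact hπ ⟨f i, f j, f l, hf hij, hf hjl, by simpa only [h] using hg hli,
    by simpa only [h] using hg hij'⟩

lemma NoUnitDescent.of_apply_eq (hπ : NoUnitDescent π) {c d : ℕ} (hf : ∀ i, (f i : ℕ) = i + c)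
    (hg : ∀ v, (g v : ℕ) = v + d) (h : ∀ i, π (f i) = g (σ i)) : NoUnitDescent σ := by
  intro i j hij hji
  refine hπ (f i) (f j) (by rw [hf, hf]; omega) ?_
  rw [h, h, hg, hg]
  omega

lemma Admissible.of_apply_eq (hπ : Admissible π) {c d : ℕ} (hf : ∀ i, (f i : ℕ) = i + c)
    (hg : ∀ v, (g v : ℕ) = v + d) (h : ∀ i, π (f i) = g (σ i)) : Admissible σ := by
  have strictMono_of_shift {e : ℕ} {φ : Fin k → Fin n} (hφ : ∀ i, (φ i : ℕ) = i + e) :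
      StrictMono φ := fun a b hab => by
    rw [Fin.lt_def, hφ, hφ]
    exact Nat.add_lt_add_right hab e
  exact ⟨hπ.1.of_apply_eq (strictMono_of_shift hf) (strictMono_of_shift hg) h,
    hπ.2.of_apply_eq hf hg h⟩

end Restriction

section DirectSum

variable {k m : ℕ} {A A' : Perm (Fin k)} {C C' : Perm (Fin m)}

def directSum (A : Perm (Fin k)) (C : Perm (Fin m)) : Perm (Fin (k + m)) :=
  finSumFinEquiv.permCongr (A.sumCongr C)

@[simp] lemma directSum_apply_castAdd (i : Fin k) :
    directSum A C (castAdd m i) = castAdd m (A i) := by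
  simp [directSum]

@[simp] lemma directSum_apply_natAdd (j : Fin m) :
    directSum A C (natAdd k j) = natAdd k (C j) := by
  simp [directSum]

lemma directSum_inj : directSum A C = directSum A' C' ↔ A = A' ∧ C = C' := by
  refine ⟨fun h => ?_, fun ⟨hA, hC⟩ => hA ▸ hC ▸ rfl⟩
  simpa using @sumCongrHom_injective _ _ (A, C) (A', C') ((permCongr finSumFinEquiv).injective h)

lemma apply_castAdd_lt_of_forall_lt {π : Perm (Fin (k + m))}
    (h : ∀ i j, π (castAdd m i) < π (natAdd k j)) (i : Fin k) : (π (castAdd m i) : ℕ) < k := by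
  by_contra hk
  -- the `m` values on the right all exceed `π (castAdd m i) ≥ k`, leaving fewer than `m` slots
  have hcard := Finset.card_le_card_of_injOn (fun j => π (natAdd k j))
    (s := Finset.univ) (t := Finset.Ioi (π (castAdd m i)))
    (fun j _ => Finset.mem_Ioi.2 (h i j)) (fun a _ b _ hab => (natAdd_inj k).1 (π.injective hab))
  simp only [Finset.card_univ, Fintype.card_fin, Fin.card_Ioi] at hcard
  omega

lemma exists_directSum_eq {π : Perm (Fin (k + m))}
    (h : ∀ i j, π (castAdd m i) < π (natAdd k j)) : ∃ A C, directSum A C = π := by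
  set σ := (permCongr finSumFinEquiv).symm π
  have hσ : Set.MapsTo σ (Set.range Sum.inl) (Set.range Sum.inl) := by
    rintro _ ⟨i, rfl⟩
    obtain ⟨a, ha⟩ : ∃ a, π (castAdd m i) = castAdd m a :=
      ⟨⟨_, apply_castAdd_lt_of_forall_lt h i⟩, rfl⟩
    exact ⟨a, by simp [σ, ha]⟩
  obtain ⟨⟨A, C⟩, hAC⟩ := mem_sumCongrHom_range_of_perm_mapsTo_inl hσ
  refine ⟨A, C, ?_⟩
  rw [← (permCongr finSumFinEquiv).apply_symm_apply π]
  exact congrArg _ hAC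

lemma Avoids231.directSum (hA : Avoids231 A) (hC : Avoids231 C) : Avoids231 (directSum A C) := by
  rintro ⟨i, j, l, hij, hjl, hli, hij'⟩
  induction i using Fin.addCases <;> induction j using Fin.addCases <;>
    induction l using Fin.addCases <;>
    simp only [directSum_apply_castAdd, directSum_apply_natAdd, Fin.lt_def, val_castAdd,
      val_natAdd] at hij hjl hli hij'
  case left.left.left i j l => exact hA ⟨i, j, l, hij, hjl, hli, hij'⟩
  case right.right.right i j l =>
    exact hC ⟨i, j, l, Fin.lt_def.2 (by omega), Fin.lt_def.2 (by omega),
      Fin.lt_def.2 (by omega), Fin.lt_def.2 (by omega)⟩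
  all_goals omega

lemma NoUnitDescent.directSum (hA : NoUnitDescent A) (hC : NoUnitDescent C) :
    NoUnitDescent (directSum A C) := by
  intro i j hij hji
  induction i using Fin.addCases <;> induction j using Fin.addCases <;>
    simp only [directSum_apply_castAdd, directSum_apply_natAdd, val_castAdd, val_natAdd]
      at hij hji
  case left.left i j => exact hA i j hij hji
  case right.right i j => exact hC i j (by omega) (by omega)
  all_goals omega

lemma admissible_directSum_iff : Admissible (directSum A C) ↔ Admissible A ∧ Admissible C := by
  refine ⟨fun h => ⟨?_, ?_⟩, fun ⟨hA, hC⟩ => ⟨hA.1.directSum hC.1, hA.2.directSum hC.2⟩⟩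
  · exact h.of_apply_eq (f := castAdd m) (g := castAdd m) (c := 0) (d := 0) (by simp) (by simp)
      (by simp)
  · exact h.of_apply_eq (f := natAdd k) (g := natAdd k) (c := k) (d := k) (by simp [add_comm])
      (by simp [add_comm]) (by simp)

end DirectSum

section ConsMax

variable {m : ℕ}

def consMax (B : Perm (Fin m)) : Perm (Fin (m + 1)) :=
  (finSuccEquiv m).trans (B.optionCongr.trans finSuccEquivLast.symm)

@[simp] lemma consMax_apply_zero (B : Perm (Fin m)) : consMax B 0 = last m := by
  simp [consMax]

@[simp] lemma consMax_apply_succ (B : Perm (Fin m)) (j : Fin m) :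
    consMax B j.succ = (B j).castSucc := by
  simp [consMax]

lemma consMax_injective : Function.Injective (consMax (m := m)) := fun B B' h =>
  Equiv.ext fun j => castSucc_injective m (by simpa using congrFun (congrArg DFunLike.coe h) j.succ)

lemma exists_consMax_eq {π : Perm (Fin (m + 1))} (h : π 0 = last m) : ∃ B, consMax B = π := by
  have hne (j : Fin m) : π j.succ ≠ last m := fun hj =>
    succ_ne_zero j (π.injective (hj.trans h.symm))
  let B (j : Fin m) : Fin m := (π j.succ).castPred (hne j)
  have hB : Function.Injective B := fun a b hab =>
    succ_injective _ (π.injective (castPred_inj.1 hab))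
  refine ⟨Equiv.ofBijective B (Finite.injective_iff_bijective.1 hB), ?_⟩
  ext x
  induction x using Fin.cases <;> simp [B, h]

lemma Avoids231.consMax {B : Perm (Fin m)} (hB : Avoids231 B) : Avoids231 (consMax B) := by
  rintro ⟨i, j, l, hij, hjl, hli, hij'⟩
  induction i using Fin.cases with
  | zero => exact (le_last _).not_gt (by simpa using hij')
  | succ i =>
    induction j using Fin.cases with
    | zero => exact (not_lt_zero hij).elim
    | succ j =>
      induction l using Fin.cases with
      | zero => exact (not_lt_zero hjl).elim
      | succ l =>
        simp only [consMax_apply_succ, castSucc_lt_castSucc_iff, succ_lt_succ_iff]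
          at hij hjl hli hij'
        exact hB ⟨i, j, l, hij, hjl, hli, hij'⟩

lemma NoUnitDescent.consMax {B : Perm (Fin (m + 1))} (hB : NoUnitDescent B)
    (h0 : B 0 ≠ last m) : NoUnitDescent (consMax B) := by
  intro i j hij hji
  induction i using Fin.cases <;> induction j using Fin.cases <;>
    simp only [consMax_apply_zero, consMax_apply_succ, val_zero, val_succ, val_last,
      val_castSucc] at hij hji
  case succ.succ i j => exact hB i j (by omega) hji
  case zero.succ j =>
    obtain rfl : j = 0 := Fin.ext (by rw [Fin.val_zero]; omega)
    exact h0 (Fin.ext (by simp only [val_last]; omega))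
  all_goals omega

lemma admissible_consMax_iff {B : Perm (Fin (m + 1))} :
    Admissible (consMax B) ↔ Admissible B ∧ B 0 ≠ last m := by
  refine ⟨fun h => ⟨?_, fun h0 => h.2 0 (succ 0) rfl ?_⟩, fun ⟨hB, h0⟩ =>
    ⟨hB.1.consMax, hB.2.consMax h0⟩⟩
  · exact h.of_apply_eq (f := succ) (g := castSucc) (c := 1) (d := 0) (by simp) (by simp)
      (by simp)
  · rw [consMax_apply_succ, consMax_apply_zero, h0]
    simp

end ConsMax

lemma Avoids231.apply_castAdd_lt_apply_natAdd {k m : ℕ} {π : Perm (Fin (k + (m + 1)))}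
    (hπ : Avoids231 π) (hmax : π (natAdd k 0) = natAdd k (last m)) (i : Fin k)
    (j : Fin (m + 1)) : π (castAdd (m + 1) i) < π (natAdd k j) := by
  have hlt_max (x) (hx : x ≠ natAdd k 0) : π x < π (natAdd k 0) := by
    have := Fin.val_ne_of_ne (π.injective.ne hx)
    rw [hmax] at this ⊢
    simp only [Fin.lt_def, val_natAdd, val_last] at this ⊢
    omega
  have hi : castAdd (m + 1) i ≠ natAdd k 0 := Fin.ne_of_lt (Fin.lt_def.2 (by simp))
  induction j using Fin.cases with
  | zero => exact hlt_max _ hi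
  | succ j =>
    have hj : castAdd (m + 1) i ≠ natAdd k j.succ := Fin.ne_of_lt (Fin.lt_def.2 (by simp; omega))
    refine lt_of_not_ge fun hle => hπ ⟨castAdd _ i, natAdd k 0, natAdd k j.succ,
      Fin.lt_def.2 (by simp), Fin.lt_def.2 (by simp), lt_of_le_of_ne hle (π.injective.ne hj.symm),
      hlt_max _ hi⟩

section Counting

noncomputable def admissibleCount (n : ℕ) : ℕ := Nat.card {π : Perm (Fin n) // Admissible π}

noncomputable def admissibleCountMaxFirst (m : ℕ) : ℕ :=
  Nat.card {π : Perm (Fin (m + 1)) // Admissible π ∧ π 0 = last m}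

lemma motzkinCount_eq_admissibleCount (n : ℕ) : motzkinCount n = admissibleCount n :=
  Nat.card_congr <| subtypeEquivRight fun π =>
    and_congr_right' (avoidsMesh_iff_noUnitDescent π)

lemma admissibleCount_zero : admissibleCount 0 = 1 := by
  rw [admissibleCount, Nat.card_congr (subtypeUnivEquiv (admissible_of_le_one zero_le_one)),
    Nat.card_perm]
  simp

lemma admissibleCountMaxFirst_zero : admissibleCountMaxFirst 0 = 1 := by
  rw [admissibleCountMaxFirst, Nat.card_congr (subtypeUnivEquiv fun π =>
    ⟨admissible_of_le_one le_rfl π, Subsingleton.elim (α := Fin 1) _ _⟩), Nat.card_perm]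
  simp

noncomputable def directSumEquiv (k m : ℕ) :
    {A : Perm (Fin k) // Admissible A} × {C : Perm (Fin (m + 1)) // Admissible C ∧ C 0 = last m} ≃
      {π : Perm (Fin (k + (m + 1))) // Admissible π ∧ π (natAdd k 0) = natAdd k (last m)} :=
  Equiv.ofBijective
    (fun p => ⟨directSum p.1.1 p.2.1, admissible_directSum_iff.2 ⟨p.1.2, p.2.2.1⟩,
      by rw [directSum_apply_natAdd, p.2.2.2]⟩)
    ⟨fun p q h => by
      obtain ⟨hA, hC⟩ := directSum_inj.1 (congrArg Subtype.val h)
      exact Prod.ext (Subtype.ext hA) (Subtype.ext hC),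
    fun ⟨π, hπ, hmax⟩ => by
      obtain ⟨A, C, rfl⟩ := exists_directSum_eq (hπ.1.apply_castAdd_lt_apply_natAdd hmax)
      obtain ⟨hA, hC⟩ := admissible_directSum_iff.1 hπ
      refine ⟨⟨⟨A, hA⟩, ⟨C, hC, ?_⟩⟩, rfl⟩
      exact (natAdd_inj k).1 (by rwa [directSum_apply_natAdd] at hmax)⟩

noncomputable def consMaxEquiv (m : ℕ) :
    {B : Perm (Fin (m + 1)) // Admissible B ∧ B 0 ≠ last m} ≃
      {C : Perm (Fin (m + 2)) // Admissible C ∧ C 0 = last (m + 1)} :=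
  Equiv.ofBijective (fun B => ⟨consMax B.1, admissible_consMax_iff.2 B.2, consMax_apply_zero _⟩)
    ⟨fun B B' h => Subtype.ext (consMax_injective (congrArg Subtype.val h)),
    fun ⟨C, hC, h0⟩ => by
      obtain ⟨B, rfl⟩ := exists_consMax_eq h0
      exact ⟨⟨B, admissible_consMax_iff.1 hC⟩, rfl⟩⟩

lemma card_admissible_max_at {N k : ℕ} (hk : k < N) :
    Nat.card {π : Perm (Fin N) // Admissible π ∧ (π ⟨k, hk⟩ : ℕ) + 1 = N} =
      admissibleCount k * admissibleCountMaxFirst (N - 1 - k) := by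
  obtain ⟨m, rfl⟩ : ∃ m, N = k + (m + 1) := ⟨N - 1 - k, by omega⟩
  rw [show k + (m + 1) - 1 - k = m by omega, admissibleCount, admissibleCountMaxFirst,
    ← Nat.card_prod, Nat.card_congr (directSumEquiv k m)]
  refine Nat.card_congr (subtypeEquivRight fun π => and_congr_right' ?_)
  rw [show (⟨k, hk⟩ : Fin (k + (m + 1))) = natAdd k 0 from rfl, Fin.ext_iff, val_natAdd, val_last]
  omega

lemma admissibleCount_succ (n : ℕ) :
    admissibleCount (n + 1) = ∑ p ∈ Finset.HasAntidiagonal.antidiagonal n,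
      admissibleCount p.1 * admissibleCountMaxFirst p.2 := by
  rw [Finset.Nat.sum_antidiagonal_eq_sum_range_succ_mk, ← Fin.sum_univ_eq_sum_range,
    admissibleCount, Nat.card_congr (sigmaFiberEquiv fun π : {π : Perm (Fin (n + 1)) //
      Admissible π} => π.1.symm (last n)).symm, Nat.card_sigma]
  refine Finset.sum_congr rfl fun k _ => ?_
  rw [show n - k = n + 1 - 1 - k by omega, ← card_admissible_max_at k.isLt]
  refine Nat.card_congr ((subtypeSubtypeEquivSubtypeInter (fun π => Admissible π)
    (fun π : Perm (Fin (n + 1)) => π.symm (last n) = k)).trans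
    (subtypeEquivRight fun π => and_congr_right' ?_))
  rw [symm_apply_eq, Fin.ext_iff, val_last, Fin.eta]
  omega

lemma admissibleCount_succ_eq_add (m : ℕ) :
    admissibleCount (m + 1) = admissibleCountMaxFirst m + admissibleCountMaxFirst (m + 1) := by
  rw [admissibleCountMaxFirst, admissibleCountMaxFirst, ← Nat.card_congr (consMaxEquiv m),
    ← Nat.card_sum, admissibleCount]
  exact Nat.card_congr ((sumCompl fun π : {π : Perm (Fin (m + 1)) // Admissible π} =>
    π.1 0 = last m).symm.trans
      (sumCongr (subtypeSubtypeEquivSubtypeInter (fun π => Admissible π) (fun π => π 0 = last m))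
        (subtypeSubtypeEquivSubtypeInter (fun π => Admissible π) (fun π => π 0 ≠ last m))))

end Counting

section GeneratingFunction

open PowerSeries

noncomputable def admissibleGF : ℚ⟦X⟧ := PowerSeries.mk fun n => (admissibleCount n : ℚ)

noncomputable def admissibleMaxFirstGF : ℚ⟦X⟧ :=
  PowerSeries.mk fun n => (admissibleCountMaxFirst n : ℚ)

lemma admissibleGF_eq_one_add_X_mul :
    admissibleGF = 1 + X * (admissibleGF * admissibleMaxFirstGF) := by
  ext (_ | n)
  · simp [admissibleGF, admissibleCount_zero]
  · rw [map_add, coeff_succ_X_mul, coeff_mul]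
    simp [admissibleGF, admissibleMaxFirstGF, admissibleCount_succ]

lemma admissibleGF_eq_one_add_X_mul_maxFirstGF : admissibleGF = (1 + X) * admissibleMaxFirstGF := by
  ext (_ | n)
  · simp [admissibleGF, admissibleMaxFirstGF, admissibleCount_zero, admissibleCountMaxFirst_zero]
  · simp [admissibleGF, admissibleMaxFirstGF, add_mul, coeff_succ_X_mul,
      admissibleCount_succ_eq_add, add_comm]

theorem admissibleGF_eq : admissibleGF = X * admissibleGF ^ 2 - X * (admissibleGF - 1) + 1 := by
  linear_combination (1 + X) * admissibleGF_eq_one_add_X_mul -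
    X * admissibleGF * admissibleGF_eq_one_add_X_mul_maxFirstGF

lemma admissibleCount_add_two_add (n : ℕ) :
    admissibleCount (n + 2) + admissibleCount (n + 1) =
      ∑ p ∈ Finset.HasAntidiagonal.antidiagonal (n + 1),
        admissibleCount p.1 * admissibleCount p.2 := by
  have h := congrArg (coeff (n + 2)) admissibleGF_eq
  rw [map_add, map_sub, coeff_succ_X_mul, coeff_succ_X_mul, pow_two, coeff_mul] at h
  simp only [admissibleGF, coeff_mk, map_sub, coeff_one, Nat.add_eq_zero_iff, one_ne_zero,
    and_false, ↓reduceIte, sub_zero, OfNat.ofNat_ne_zero, add_zero] at h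
  rw [← Nat.cast_inj (R := ℚ)]
  push_cast
  linarith

end GeneratingFunction

lemma motzkin_succ (n : ℕ) :
    motzkin (n + 1) = motzkin n + ∑ i : Fin n, motzkin i * motzkin (n - 1 - i) := by
  rw [motzkin, Nat.strongRecOn_eq]
  rfl

lemma admissibleCount_succ_eq_motzkin (n : ℕ) : admissibleCount (n + 1) = motzkin n := by
  induction n using Nat.strong_induction_on with
  | _ n ih =>
    cases n with
    | zero =>
      simp [admissibleCount_succ, admissibleCount_zero, admissibleCountMaxFirst_zero, motzkin,
        Nat.strongRecOn_eq]
    | succ n =>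
      have h := admissibleCount_add_two_add n
      rw [Finset.Nat.sum_antidiagonal_succ, Finset.Nat.sum_antidiagonal_eq_sum_range_succ_mk,
        Finset.sum_range_succ] at h
      simp only [Nat.sub_self, admissibleCount_zero, one_mul, mul_one] at h
      have hsum : ∑ i ∈ Finset.range n, motzkin i * motzkin (n - 1 - i) =
          ∑ k ∈ Finset.range n, admissibleCount (k + 1) * admissibleCount (n - k) := by
        refine Finset.sum_congr rfl fun k hk => ?_
        rw [Finset.mem_range] at hk
        rw [← ih k (by omega), ← ih (n - 1 - k) (by omega), show n - 1 - k + 1 = n - k by omega]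
      rw [motzkin_succ, ← ih n n.lt_succ_self,
        Fin.sum_univ_eq_sum_range (fun i => motzkin i * motzkin (n - 1 - i)), hsum]
      show admissibleCount (n + 2) = _
      omega

/-- The avoiders of `{231, (21, {⟨0,1⟩,⟨1,0⟩,⟨1,1⟩,⟨1,2⟩,⟨2,1⟩})}` are counted
by the Motzkin numbers (offset 1), and their generating function `P` satisfies
`P = x·P² - x·(P - 1) + 1`. -/
theorem motzkinCount_eq_motzkin :
    motzkinCount 0 = 1 ∧ (∀ n : ℕ, 1 ≤ n → motzkinCount n = motzkin (n - 1)) ∧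
      ((PowerSeries.mk fun n => (motzkinCount n : ℚ)) =
        PowerSeries.X * (PowerSeries.mk fun n => (motzkinCount n : ℚ)) ^ 2 -
          PowerSeries.X * ((PowerSeries.mk fun n => (motzkinCount n : ℚ)) - 1) + 1) := by
  have hcount : motzkinCount = admissibleCount := funext motzkinCount_eq_admissibleCount
  refine ⟨?_, fun n hn => ?_, ?_⟩
  · rw [hcount, admissibleCount_zero]
  · obtain ⟨n, rfl⟩ := Nat.exists_eq_add_of_le' hn
    rw [hcount, Nat.add_sub_cancel, admissibleCount_succ_eq_motzkin]
  · rw [hcount]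
    exact admissibleGF_eq
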